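/- Consider the DNP-game value computation on a finite directed graph: define V₀ to be the set of Min-sinks, and inductively V_k to be the set of nodes not in V_{<k} = V₀ ∪ ⋯ ∪ V_{k-1} such that either (the node is a Max node with an outgoing edge into V_{<k}) or (the node is a Min node, not a sink, all of whose outgoing edges lead into V_{<k}). Then for every k ∈ {0,…,n-1}, V_k = {v : δ(v) = λ^k}, where δ is the unique solution of the DNP-game equations with discount λ ∈ (0,1). -/

import Mathlib

/-- `δ : V → ℝ` solves the optimality equations of the discounted normal play
game on the directed graph `E` with Max-nodes `isMax` and discount `lam`:
`δ(s) = -1` on Max-sinks, `δ(s) = 1` on Min-sinks,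
`δ(a) = λ · max_{(a,b) ∈ E} δ(b)` on non-sink Max nodes and
`δ(a) = λ · min_{(a,b) ∈ E} δ(b)` on non-sink Min nodes. -/
def DNPsol {V : Type*} (E : V → V → Prop) (isMax : V → Prop) (lam : ℝ)
    (δ : V → ℝ) : Prop :=
  (∀ a, isMax a → (∀ b, ¬E a b) → δ a = -1) ∧
  (∀ a, ¬isMax a → (∀ b, ¬E a b) → δ a = 1) ∧
  (∀ a, isMax a → (∃ b, E a b) →
    ∃ b, E a b ∧ δ a = lam * δ b ∧ ∀ c, E a c → δ c ≤ δ b) ∧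
  (∀ a, ¬isMax a → (∃ b, E a b) →
    ∃ b, E a b ∧ δ a = lam * δ b ∧ ∀ c, E a c → δ b ≤ δ c)

/-- `Vless E isMax k` is the set `V_{<k} = V₀ ∪ ⋯ ∪ V_{k-1}` of the inductive
computation: `V₀` is the set of Min-sinks, and for `k ≥ 1`, `V_k` consists of
the nodes outside `V_{<k}` which are either Max nodes with an outgoing edge
into `V_{<k}`, or non-sink Min nodes all of whose outgoing edges lead into
`V_{<k}`. -/
def Vless {V : Type*} (E : V → V → Prop) (isMax : V → Prop) : ℕ → Set V
  | 0 => ∅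
  | k + 1 =>
    Vless E isMax k ∪
      if k = 0 then {v | ¬isMax v ∧ ∀ b, ¬E v b}
      else {v | v ∉ Vless E isMax k ∧
        ((isMax v ∧ ∃ b, E v b ∧ b ∈ Vless E isMax k) ∨
         (¬isMax v ∧ (∃ b, E v b) ∧ ∀ b, E v b → b ∈ Vless E isMax k))}

/-!
By induction on `k`, every node of `V_{<k+1}` has value at least `λ^k`, and every node outside
`V_{<k}` has value at most `λ^k`: in both cases the edge that decides the node's level leads to a
node bounded by `λ^(k-1)`, and the optimality equations multiply that bound by `λ`. The base case
`δ ≤ 1` is a maximum principle on the finite graph. The two bounds force `δ = λ^k` on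
`V_k = V_{<k+1} \ V_{<k}`, and since `k ↦ λ^k` is strictly decreasing, no other node takes the
value `λ^k`.
-/

section Vless

variable {V : Type*} (E : V → V → Prop) (isMax : V → Prop)

lemma monotone_Vless : Monotone (Vless E isMax) :=
  monotone_nat_of_le_succ fun _ => Set.subset_union_left

variable {E isMax}

lemma mem_Vless_one {v : V} : v ∈ Vless E isMax 1 ↔ ¬isMax v ∧ ∀ b, ¬E v b := by
  simp [Vless]

lemma mem_Vless_add_two {k : ℕ} {v : V} :
    v ∈ Vless E isMax (k + 2) ↔ v ∈ Vless E isMax (k + 1) ∨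
      (isMax v ∧ ∃ b, E v b ∧ b ∈ Vless E isMax (k + 1)) ∨
      (¬isMax v ∧ (∃ b, E v b) ∧ ∀ b, E v b → b ∈ Vless E isMax (k + 1)) := by
  rw [Vless, if_neg k.succ_ne_zero]
  by_cases h : v ∈ Vless E isMax (k + 1) <;> simp [h]

lemma notMem_Vless_succ_cases {k : ℕ} {v : V} (hv : v ∉ Vless E isMax (k + 1)) :
    (isMax v ∧ ∀ b, E v b → b ∉ Vless E isMax k) ∨
      (¬isMax v ∧ ∃ b, E v b ∧ b ∉ Vless E isMax k) := by
  by_cases hm : isMax v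
  · cases k with
    | zero => exact .inl ⟨hm, fun _ _ => id⟩
    | succ k =>
      rw [mem_Vless_add_two] at hv
      exact .inl ⟨hm, fun b hb hbV => hv (.inr (.inl ⟨hm, b, hb, hbV⟩))⟩
  · have hs : ∃ b, E v b := by
      by_contra! hs
      exact hv (monotone_Vless E isMax (Nat.le_add_left 1 k) (mem_Vless_one.2 ⟨hm, hs⟩))
    cases k with
    | zero =>
      obtain ⟨b, hb⟩ := hs
      exact .inr ⟨hm, b, hb, id⟩
    | succ k =>
      rw [mem_Vless_add_two] at hv
      by_contra! h
      exact hv (.inr (.inr ⟨hm, hs, h.2 hm⟩))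

end Vless

namespace DNPsol

variable {V : Type*} {E : V → V → Prop} {isMax : V → Prop} {lam : ℝ} {δ : V → ℝ}

lemma exists_eq_mul (hδ : DNPsol E isMax lam δ) {a : V} (hs : ∃ b, E a b) :
    ∃ b, E a b ∧ δ a = lam * δ b := by
  by_cases hm : isMax a
  · obtain ⟨b, hb, heq, -⟩ := hδ.2.2.1 a hm hs
    exact ⟨b, hb, heq⟩
  · obtain ⟨b, hb, heq, -⟩ := hδ.2.2.2 a hm hs
    exact ⟨b, hb, heq⟩

lemma le_one [Finite V] (hδ : DNPsol E isMax lam δ) (hlam0 : 0 ≤ lam) (hlam1 : lam < 1)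
    (v : V) : δ v ≤ 1 := by
  have : Nonempty V := ⟨v⟩
  obtain ⟨w, hw⟩ := Finite.exists_max δ
  refine (hw v).trans ?_
  by_cases hs : ∃ b, E w b
  · obtain ⟨b, -, heq⟩ := hδ.exists_eq_mul hs
    by_contra! hw1
    have : lam * δ b < δ w :=
      calc lam * δ b ≤ lam * δ w := mul_le_mul_of_nonneg_left (hw b) hlam0
        _ < 1 * δ w := by gcongr
        _ = δ w := one_mul _
    exact this.ne' heq
  · push Not at hs
    by_cases hm : isMax w
    · rw [hδ.1 w hm hs]; norm_num
    · rw [hδ.2.1 w hm hs]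

lemma le_mul_of_isMax (hδ : DNPsol E isMax lam δ) (hlam : 0 ≤ lam) {a : V} (hm : isMax a)
    {x : ℝ} (hx : 0 ≤ x) (h : ∀ b, E a b → δ b ≤ x) : δ a ≤ lam * x := by
  by_cases hs : ∃ b, E a b
  · obtain ⟨b, hb, heq, -⟩ := hδ.2.2.1 a hm hs
    rw [heq]
    exact mul_le_mul_of_nonneg_left (h b hb) hlam
  · push Not at hs
    rw [hδ.1 a hm hs]
    linarith [mul_nonneg hlam hx]

lemma mul_le_of_isMax (hδ : DNPsol E isMax lam δ) (hlam : 0 ≤ lam) {a b : V} (hm : isMax a)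
    (hab : E a b) : lam * δ b ≤ δ a := by
  obtain ⟨c, -, heq, hmax⟩ := hδ.2.2.1 a hm ⟨b, hab⟩
  rw [heq]
  exact mul_le_mul_of_nonneg_left (hmax b hab) hlam

lemma le_mul_of_not_isMax (hδ : DNPsol E isMax lam δ) (hlam : 0 ≤ lam) {a b : V}
    (hm : ¬isMax a) (hab : E a b) : δ a ≤ lam * δ b := by
  obtain ⟨c, -, heq, hmin⟩ := hδ.2.2.2 a hm ⟨b, hab⟩
  rw [heq]
  exact mul_le_mul_of_nonneg_left (hmin b hab) hlam

lemma mul_le_of_not_isMax (hδ : DNPsol E isMax lam δ) (hlam : 0 ≤ lam) {a : V}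
    (hm : ¬isMax a) (hs : ∃ b, E a b) {x : ℝ} (h : ∀ b, E a b → x ≤ δ b) :
    lam * x ≤ δ a := by
  obtain ⟨b, hb, heq, -⟩ := hδ.2.2.2 a hm hs
  rw [heq]
  exact mul_le_mul_of_nonneg_left (h b hb) hlam

lemma le_pow_of_notMem_Vless [Finite V] (hδ : DNPsol E isMax lam δ) (hlam0 : 0 ≤ lam)
    (hlam1 : lam < 1) (k : ℕ) {v : V} (hv : v ∉ Vless E isMax k) : δ v ≤ lam ^ k := by
  induction k generalizing v with
  | zero => simpa using hδ.le_one hlam0 hlam1 v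
  | succ k ih =>
    rw [pow_succ']
    rcases notMem_Vless_succ_cases hv with ⟨hm, h⟩ | ⟨hm, b, hb, hbV⟩
    · exact hδ.le_mul_of_isMax hlam0 hm (pow_nonneg hlam0 k) fun b hb => ih (h b hb)
    · exact (hδ.le_mul_of_not_isMax hlam0 hm hb).trans
        (mul_le_mul_of_nonneg_left (ih hbV) hlam0)

lemma pow_le_of_mem_Vless_succ (hδ : DNPsol E isMax lam δ) (hlam0 : 0 ≤ lam) (hlam1 : lam ≤ 1)
    (k : ℕ) {v : V} (hv : v ∈ Vless E isMax (k + 1)) : lam ^ k ≤ δ v := by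
  induction k generalizing v with
  | zero =>
    obtain ⟨hm, hs⟩ := mem_Vless_one.1 hv
    rw [hδ.2.1 v hm hs, pow_zero]
  | succ k ih =>
    rw [pow_succ']
    rcases mem_Vless_add_two.1 hv with hv | ⟨hm, b, hb, hbV⟩ | ⟨hm, hs, h⟩
    · exact (mul_le_of_le_one_left (pow_nonneg hlam0 k) hlam1).trans (ih hv)
    · exact (mul_le_mul_of_nonneg_left (ih hbV) hlam0).trans (hδ.mul_le_of_isMax hlam0 hm hb)
    · exact hδ.mul_le_of_not_isMax hlam0 hm hs fun b hb => ih (h b hb)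

end DNPsol

/-- For every `k ∈ {0,…,n-1}`, the set `V_k = V_{<k+1} \ V_{<k}` of the
inductive computation equals `{v | δ(v) = λ^k}`, where `δ` is the solution of
the DNP-game equations with discount `λ ∈ (0,1)`. -/
theorem stmt19 {V : Type*} [Fintype V] (E : V → V → Prop) (isMax : V → Prop)
    (lam : ℝ) (hlam0 : 0 < lam) (hlam1 : lam < 1)
    (δ : V → ℝ) (hδ : DNPsol E isMax lam δ) :
    ∀ k, k ≤ Fintype.card V - 1 →
      Vless E isMax (k + 1) \ Vless E isMax k = {v : V | δ v = lam ^ k} := by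
  intro k _
  have upper := hδ.le_pow_of_notMem_Vless hlam0.le hlam1
  have lower := hδ.pow_le_of_mem_Vless_succ hlam0.le hlam1.le
  have pow_lt {i j : ℕ} (h : i < j) : lam ^ j < lam ^ i :=
    pow_lt_pow_right_of_lt_one₀ hlam0 hlam1 h
  ext v
  refine ⟨fun ⟨hv1, hv0⟩ => le_antisymm (upper k hv0) (lower k hv1), fun hv => ⟨?_, ?_⟩⟩
  · by_contra h
    exact (upper (k + 1) h).not_gt (hv ▸ pow_lt k.lt_succ_self)
  · cases k with
    | zero => simp [Vless]
    | succ j => exact fun h => (lower j h).not_gt (hv ▸ pow_lt j.lt_succ_self)
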